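/- arXiv:1211.1467 — 2 statements merged into one kernel-verified Lean document; each statement's English description precedes it below -/
import Mathlib

section
/- Define alpha(k,t) = sum_{l=0}^{k-t} C(k-t,l) / C(t+l,l) for 1 <= t <= k. Then alpha(k,k) = 1 and alpha is non-increasing in t, i.e., alpha(k,t+1) <= alpha(k,t) for all 1 <= t < k. -/
open Finset

/-- `α(k,t) = ∑_{l=0}^{k-t} C(k-t,l) / C(t+l,l)`. -/
def alpha (k t : ℕ) : ℚ :=
  ∑ l ∈ Finset.range (k - t + 1),
    (Nat.choose (k - t) l : ℚ) / (Nat.choose (t + l) l : ℚ)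

theorem alpha_at_k_and_antitone (k t : ℕ) (ht : 1 ≤ t) (htk : t ≤ k) :
    alpha k k = 1 ∧ (t < k → alpha k (t + 1) ≤ alpha k t) := by
  constructor
  · simp [alpha]
  · intro hlt
    unfold alpha
    have h1 : k - (t + 1) + 1 = k - t := by omega
    rw [h1]
    calc ∑ l ∈ Finset.range (k - t),
          (Nat.choose (k - (t + 1)) l : ℚ) / (Nat.choose (t + 1 + l) l : ℚ)
        ≤ ∑ l ∈ Finset.range (k - t),
          (Nat.choose (k - t) l : ℚ) / (Nat.choose (t + l) l : ℚ) := by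
          apply Finset.sum_le_sum
          intro l _
          apply div_le_div₀ (by positivity)
          · exact_mod_cast Nat.choose_le_choose l (by omega)
          · exact_mod_cast Nat.choose_pos (by omega)
          · exact_mod_cast Nat.choose_le_choose l (by omega)
      _ ≤ ∑ l ∈ Finset.range (k - t + 1),
          (Nat.choose (k - t) l : ℚ) / (Nat.choose (t + l) l : ℚ) := by
          apply Finset.sum_le_sum_of_subset_of_nonneg
          · exact Finset.range_subset_range.2 (by omega)
          · intro i _ _
            positivity
end

section
/- Let G be a connected n-vertex d-regular graph with eigenvalues d = λ_1 >= λ_2 >= ... >= λ_n and eigenvectors u_1,...,u_n. Set λ*_1 = n-1-d and λ*_i = -1-λ_i for i >= 2. Let B be the set of vectors b ∈ {-1,0,1}^k with at least t entries equal to 1. Then for every (i_1,...,i_k), the vector u_{i_1} ⊗ ... ⊗ u_{i_k} is an eigenvector of the adjacency matrix of GP_{k,t}(G), with eigenvalue Λ_{i_1...i_k} = sum_{b ∈ B} prod_{j=1}^{k} ( ((1+b_j)/2) λ_{i_j}^{|b_j|} + ((1-b_j)/2) (λ*_{i_j})^{|b_j|} ). -/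
/-!
Each summand is a Kronecker product of copies of `A`, `I` and `J - I - A = A(Gᶜ)`, and its
`(x, y)` entry is `1` exactly when `b` is the coordinatewise pattern "adjacent / equal / neither"
of `(x, y)`; summing over `B` gives the adjacency matrix of `GP_{k,t}(G)` (here `t ≥ 1` ensures
adjacent tuples are distinct). A Kronecker product acts factorwise on `u_{i_1} ⊗ ⋯ ⊗ u_{i_k}`, so
it remains to see that every `u_i` is an eigenvector of `A(Gᶜ)`: the first one lies in the kernel
of the Laplacian `dI - A`, hence is constant by connectivity, and the others are orthogonal to it,
hence have coordinate sum `0` and are killed by `J`.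
-/

open Matrix Finset

/-- The `t`-threshold graph product `GP_{k,t}(G)`. -/
def GP {V : Type*} (k t : ℕ) (G : SimpleGraph V) [DecidableRel G.Adj] :
    SimpleGraph (Fin k → V) where
  Adj x y := x ≠ y ∧ t ≤ (Finset.univ.filter (fun i => G.Adj (x i) (y i))).card
  symm := by
    constructor
    rintro x y ⟨hne, h⟩
    refine ⟨hne.symm, ?_⟩
    have hset : (Finset.univ.filter (fun i => G.Adj (y i) (x i)))
        = (Finset.univ.filter (fun i => G.Adj (x i) (y i))) := by
      apply Finset.filter_congr
      intro i _
      exact G.adj_comm (y i) (x i)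
    rw [hset]
    exact h
  loopless := ⟨fun x h => h.1 rfl⟩

instance {V : Type*} [DecidableEq V] (k t : ℕ) (G : SimpleGraph V)
    [DecidableRel G.Adj] : DecidableRel (GP k t G).Adj :=
  fun _ _ => inferInstanceAs (Decidable (_ ∧ _))

section

variable {R : Type*}

section piKronecker

variable {ι m n : Type*} [Fintype ι]

def piKronecker [CommMonoid R] (M : ι → Matrix m n R) : Matrix (ι → m) (ι → n) R :=
  of fun x y => ∏ i, M i (x i) (y i)

theorem piKronecker_mulVec_prod [CommSemiring R] [DecidableEq ι] [Fintype n]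
    (M : ι → Matrix m n R) (f : ι → n → R) :
    piKronecker M *ᵥ (fun y => ∏ i, f i (y i)) = fun x => ∏ i, (M i *ᵥ f i) (x i) := by
  ext x
  simp only [mulVec, dotProduct, piKronecker, of_apply, ← prod_mul_distrib]
  exact (Fintype.prod_sum fun i w => M i (x i) w * f i w).symm

theorem piKronecker_mulVec_prod_of_mulVec_eq_smul [CommSemiring R] [DecidableEq ι] [Fintype n]
    {M : ι → Matrix n n R} {f : ι → n → R} {c : ι → R} (hM : ∀ i, M i *ᵥ f i = c i • f i) :
    piKronecker M *ᵥ (fun y => ∏ i, f i (y i)) = (∏ i, c i) • fun x => ∏ i, f i (x i) := by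
  ext x
  simp [piKronecker_mulVec_prod, hM, prod_mul_distrib]

end piKronecker

theorem sum_eq_zero_of_dotProduct_eq_zero_of_const {V : Type*} [Fintype V] [Semiring R]
    [NoZeroDivisors R] {f g : V → R} (hg : ∀ v w, g v = g w) (hg0 : g ≠ 0)
    (hfg : f ⬝ᵥ g = 0) : ∑ v, f v = 0 := by
  obtain ⟨v, hv⟩ := Function.ne_iff.mp hg0
  have hdot : f ⬝ᵥ g = (∑ w, f w) * g v := by
    rw [dotProduct, sum_mul]
    exact sum_congr rfl fun w _ => by rw [hg w v]
  exact (mul_eq_zero.mp (hdot ▸ hfg)).resolve_right hv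

namespace SimpleGraph

variable {V : Type*} [DecidableEq V] (G : SimpleGraph V) [DecidableRel G.Adj]

theorem compl_adjMatrix_mulVec [Fintype V] [Ring R] (f : V → R) :
    Gᶜ.adjMatrix R *ᵥ f = (fun _ => ∑ w, f w) - f - G.adjMatrix R *ᵥ f := by
  classical
  have hcompl : Gᶜ.adjMatrix R = of 1 - 1 - G.adjMatrix R := by
    rw [← G.compl_adjMatrix_eq_adjMatrix_compl R,
      ← G.one_add_adjMatrix_add_compl_adjMatrix_eq_of_one R]
    abel
  rw [hcompl, sub_mulVec, sub_mulVec, one_mulVec]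
  congr 2
  ext v
  simp [mulVec, dotProduct]

theorem compl_adjMatrix_mulVec_of_sum_eq_zero [Fintype V] [Ring R] {f : V → R} {μ : R}
    (hsum : ∑ v, f v = 0) (hf : G.adjMatrix R *ᵥ f = μ • f) :
    Gᶜ.adjMatrix R *ᵥ f = (-1 - μ) • f := by
  rw [compl_adjMatrix_mulVec, hsum, hf]
  ext v
  simp [sub_mul]

theorem compl_adjMatrix_mulVec_of_const [Fintype V] [Ring R] {d : ℕ}
    (hreg : G.IsRegularOfDegree d) {f : V → R} (hf : ∀ v w, f v = f w) :
    Gᶜ.adjMatrix R *ᵥ f = ((Fintype.card V : R) - 1 - d) • f := by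
  ext v
  have hfv : f = Function.const V (f v) := funext fun w => hf w v
  rw [hfv, compl_adjMatrix_mulVec]
  simp [adjMatrix_mulVec_const_apply_of_regular hreg, sub_mul]

variable {G} in
theorem Connected.eq_of_adjMatrix_mulVec_eq_degree_smul [Fintype V] {d : ℕ}
    (hconn : G.Connected) (hreg : G.IsRegularOfDegree d) {f : V → ℝ}
    (hf : G.adjMatrix ℝ *ᵥ f = (d : ℝ) • f) (v w : V) : f v = f w := by
  have hlap : G.lapMatrix ℝ *ᵥ f = 0 := by
    ext x
    rw [lapMatrix_mulVec_apply, hreg x, ← adjMatrix_mulVec_apply, hf]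
    simp
  exact (G.lapMatrix_mulVec_eq_zero_iff_forall_reachable).mp hlap v w (hconn.preconnected v w)

def thresholdFactor (R : Type*) [Zero R] [One R] (b : ℤ) : Matrix V V R :=
  if b = 1 then G.adjMatrix R else if b = 0 then 1 else Gᶜ.adjMatrix R

def adjSign (v w : V) : ℤ :=
  if G.Adj v w then 1 else if v = w then 0 else -1

theorem adjSign_mem (v w : V) : G.adjSign v w ∈ ({-1, 0, 1} : Finset ℤ) := by
  unfold adjSign
  split_ifs <;> simp

theorem adjSign_eq_one_iff {v w : V} : G.adjSign v w = 1 ↔ G.Adj v w := by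
  unfold adjSign
  split_ifs <;> simp_all

theorem thresholdFactor_apply [Zero R] [One R] {b : ℤ} (hb : b ∈ ({-1, 0, 1} : Finset ℤ))
    (v w : V) : G.thresholdFactor R b v w = if G.adjSign v w = b then 1 else 0 := by
  simp only [mem_insert, mem_singleton] at hb
  rcases hb with rfl | rfl | rfl <;> by_cases hadj : G.Adj v w <;> by_cases hvw : v = w <;>
    simp_all [thresholdFactor, adjSign, adjMatrix_apply, one_apply]

theorem thresholdFactor_mulVec_eq_smul [Fintype V] [Field R] [CharZero R] {b : ℤ}
    (hb : b ∈ ({-1, 0, 1} : Finset ℤ)) {f : V → R} {μ μ' : R}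
    (hA : G.adjMatrix R *ᵥ f = μ • f) (hAc : Gᶜ.adjMatrix R *ᵥ f = μ' • f) :
    G.thresholdFactor R b *ᵥ f =
      (((1 + (b : R)) / 2) * μ ^ b.natAbs + ((1 - (b : R)) / 2) * μ' ^ b.natAbs) • f := by
  simp only [mem_insert, mem_singleton] at hb
  rcases hb with rfl | rfl | rfl <;> norm_num [thresholdFactor, hA, hAc]

end SimpleGraph

open SimpleGraph

def thresholdSigns (k t : ℕ) : Finset (Fin k → ℤ) :=
  {b ∈ Fintype.piFinset fun _ => {-1, 0, 1} | t ≤ #{j | b j = 1}}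

section GP

variable {V : Type*} (G : SimpleGraph V) [DecidableRel G.Adj] {k t : ℕ}

theorem GP_adj_iff (ht : 1 ≤ t) {x y : Fin k → V} :
    (GP k t G).Adj x y ↔ t ≤ #{i | G.Adj (x i) (y i)} := by
  refine ⟨And.right, fun h => ⟨fun hxy => ?_, h⟩⟩
  obtain ⟨i, hi⟩ := card_pos.mp (lt_of_lt_of_le ht h)
  exact G.ne_of_adj (mem_filter.mp hi).2 (congrFun hxy i)

theorem adjMatrix_GP_eq_sum [Fintype V] [DecidableEq V] [CommSemiring R] (ht : 1 ≤ t) :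
    (GP k t G).adjMatrix R =
      ∑ b ∈ thresholdSigns k t, piKronecker fun j => G.thresholdFactor R (b j) := by
  ext x y
  set sign : Fin k → ℤ := fun j => G.adjSign (x j) (y j)
  have hterm : ∀ b ∈ thresholdSigns k t,
      piKronecker (fun j => G.thresholdFactor R (b j)) x y = if sign = b then 1 else 0 := by
    intro b hb
    have hb' := Fintype.mem_piFinset.mp (mem_filter.mp hb).1
    simp only [piKronecker, of_apply, G.thresholdFactor_apply (hb' _)]
    split_ifs with h
    · exact prod_eq_one fun j _ => if_pos (congrFun h j)
    · obtain ⟨j, hj⟩ := Function.ne_iff.mp h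
      exact prod_eq_zero (mem_univ j) (if_neg hj)
  have hsign : sign ∈ thresholdSigns k t ↔ (GP k t G).Adj x y := by
    simp [thresholdSigns, sign, G.adjSign_mem, G.adjSign_eq_one_iff, GP_adj_iff G ht]
  rw [Matrix.sum_apply, sum_congr rfl hterm, sum_ite_eq, adjMatrix_apply]
  exact if_congr hsign.symm rfl rfl

end GP

end

theorem GP_spectrum_general {V : Type*} [Fintype V] [DecidableEq V]
    (G : SimpleGraph V) [DecidableRel G.Adj] (hconn : G.Connected)
    (n d k t : ℕ) (hn : Fintype.card V = n) (hn0 : 0 < n)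
    (hreg : G.IsRegularOfDegree d) (ht : 1 ≤ t)
    (lam : Fin n → ℝ) (u : Fin n → V → ℝ) (lamStar : Fin n → ℝ)
    (hlam_first : lam ⟨0, hn0⟩ = d)
    (heig : ∀ i, (G.adjMatrix ℝ).mulVec (u i) = lam i • u i)
    (horth : ∀ i j, u i ⬝ᵥ u j = if i = j then 1 else 0)
    (hstar_first : lamStar ⟨0, hn0⟩ = (n : ℝ) - 1 - d)
    (hstar : ∀ i, i ≠ ⟨0, hn0⟩ → lamStar i = -1 - lam i) :
    ∀ idx : Fin k → Fin n,
      ((GP k t G).adjMatrix ℝ).mulVec (fun x => ∏ j, u (idx j) (x j)) =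
        (∑ b ∈ (Fintype.piFinset fun _ : Fin k => ({-1, 0, 1} : Finset ℤ)).filter
            (fun b => t ≤ (Finset.univ.filter fun j => b j = 1).card),
          ∏ j, (((1 + (b j : ℝ)) / 2) * lam (idx j) ^ (b j).natAbs
            + ((1 - (b j : ℝ)) / 2) * lamStar (idx j) ^ (b j).natAbs))
        • (fun x => ∏ j, u (idx j) (x j)) := by
  set z : Fin n := ⟨0, hn0⟩
  have hconst : ∀ v w, u z v = u z w :=
    hconn.eq_of_adjMatrix_mulVec_eq_degree_smul hreg (hlam_first ▸ heig z)
  have hz0 : u z ≠ 0 := fun h => by simpa [h] using horth z z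
  have hcompl : ∀ i, Gᶜ.adjMatrix ℝ *ᵥ u i = lamStar i • u i := by
    intro i
    by_cases hi : i = z
    · rw [hi, hstar_first, ← hn]
      exact G.compl_adjMatrix_mulVec_of_const hreg hconst
    · rw [hstar i hi]
      refine G.compl_adjMatrix_mulVec_of_sum_eq_zero ?_ (heig i)
      exact sum_eq_zero_of_dotProduct_eq_zero_of_const hconst hz0 (by rw [horth, if_neg hi])
  intro idx
  rw [adjMatrix_GP_eq_sum G ht, sum_mulVec, sum_smul]
  refine sum_congr rfl fun b hb => piKronecker_mulVec_prod_of_mulVec_eq_smul fun j => ?_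
  exact G.thresholdFactor_mulVec_eq_smul (Fintype.mem_piFinset.mp (mem_filter.mp hb).1 j)
    (heig _) (hcompl _)

theorem GP_spectrum {V : Type*} [Fintype V] [DecidableEq V]
    (G : SimpleGraph V) [DecidableRel G.Adj] (hconn : G.Connected)
    (n d k t : ℕ) (hn : Fintype.card V = n) (hn0 : 0 < n)
    (hreg : G.IsRegularOfDegree d) (ht : 1 ≤ t) (htk : t ≤ k)
    (lam : Fin n → ℝ) (u : Fin n → V → ℝ) (lamStar : Fin n → ℝ)
    (hlam_first : lam ⟨0, hn0⟩ = d)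
    (hsorted : ∀ i j : Fin n, i ≤ j → lam j ≤ lam i)
    (heig : ∀ i, (G.adjMatrix ℝ).mulVec (u i) = lam i • u i)
    (horth : ∀ i j, u i ⬝ᵥ u j = if i = j then 1 else 0)
    (hstar_first : lamStar ⟨0, hn0⟩ = (n : ℝ) - 1 - d)
    (hstar : ∀ i, i ≠ ⟨0, hn0⟩ → lamStar i = -1 - lam i) :
    ∀ idx : Fin k → Fin n,
      ((GP k t G).adjMatrix ℝ).mulVec (fun x => ∏ j, u (idx j) (x j)) =
        (∑ b ∈ (Fintype.piFinset fun _ : Fin k => ({-1, 0, 1} : Finset ℤ)).filter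
            (fun b => t ≤ (Finset.univ.filter fun j => b j = 1).card),
          ∏ j, (((1 + (b j : ℝ)) / 2) * lam (idx j) ^ (b j).natAbs
            + ((1 - (b j : ℝ)) / 2) * lamStar (idx j) ^ (b j).natAbs))
        • (fun x => ∏ j, u (idx j) (x j)) :=
  GP_spectrum_general G hconn n d k t hn hn0 hreg ht lam u lamStar hlam_first heig horth hstar_first
    hstar
end
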